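/- arXiv:2402.14615 — 2 statements merged into one kernel-verified Lean document; each statement's English description precedes it below -/
import Mathlib

section
/- The mathematical entropy S = ∑_k (−ρ_k s_k)/(γ_k − 1), with s_k = ln(p_k) − γ_k ln(ρ_k) where p_k = (γ_k − 1)(E_k − |m_k|²/(2ρ_k) − |B|²/2), is a strictly convex function of the state variables (ρ_k, m_k, E_k, B) on the domain where all ρ_k > 0 and all p_k > 0, for any number of species N ≥ 1 with γ_k > 1. -/
/-- The state space of the modified multi-ion MHD system:
densities `ρ_k`, momenta `m_k = ρ_k v_k ∈ ℝ³`, modified energies `E_k`,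
and a shared magnetic field `B ∈ ℝ³`. -/
def MultiIonState (N : ℕ) :=
  (Fin N → ℝ) × (Fin N → Fin 3 → ℝ) × (Fin N → ℝ) × (Fin 3 → ℝ)

instance (N : ℕ) : AddCommGroup (MultiIonState N) := by
  unfold MultiIonState; infer_instance

noncomputable instance (N : ℕ) : Module ℝ (MultiIonState N) := by
  unfold MultiIonState; infer_instance

/-- The pressure `p_k = (γ_k − 1)(E_k − |m_k|²/(2ρ_k) − |B|²/2)`. -/
noncomputable def ionPressure {N : ℕ} (γ : Fin N → ℝ) (u : MultiIonState N)
    (k : Fin N) : ℝ :=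
  (γ k - 1) * (u.2.2.1 k - (∑ i, (u.2.1 k i) ^ 2) / (2 * u.1 k)
    - (∑ i, (u.2.2.2 i) ^ 2) / 2)

/-- The mathematical entropy `S = ∑_k −ρ_k s_k/(γ_k − 1)` with
`s_k = log p_k − γ_k log ρ_k`. -/
noncomputable def mathEntropy {N : ℕ} (γ : Fin N → ℝ) (u : MultiIonState N) : ℝ :=
  ∑ k, -(u.1 k * (Real.log (ionPressure γ u k) - γ k * Real.log (u.1 k)))
    / (γ k - 1)

/-!
Per species, `-ρ s / (γ - 1) = ρ log ρ + (γ - 1)⁻¹ ρ (-log (p / ρ))`: a strictly convex function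
of `ρ` plus the perspective of the strictly convex `-log`. Hence it is strictly convex in
`(ρ, p)` and strictly decreasing in `p`. The pressure is concave in the state, because the
kinetic energy `|m|² / (2ρ)` is the perspective of `|·|² / 2` and `|B|² / 2` is convex, so the
entropy is convex. For strictness, either some species has different `(ρ, p)` at the two states,
or the velocity of some species or `B` differs, which makes the pressure strictly concave; if
neither happens the states agree, since `E` is recovered from `ρ`, `m`, `p` and `B`.
-/

open Real Set

section Perspective

variable {E : Type*} [AddCommGroup E] [Module ℝ E]

noncomputable def perspective (φ : E → ℝ) (t : ℝ) (x : E) : ℝ := t * φ (t⁻¹ • x)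

variable {s : Set E} {φ : E → ℝ}

private lemma perspective_weights {a b ρ₁ ρ₂ : ℝ} (x₁ x₂ : E) (hρ₁ : 0 < ρ₁) (hρ₂ : 0 < ρ₂)
    (hρ : 0 < a * ρ₁ + b * ρ₂) :
    (a * ρ₁ / (a * ρ₁ + b * ρ₂)) • (ρ₁⁻¹ • x₁) + (b * ρ₂ / (a * ρ₁ + b * ρ₂)) • (ρ₂⁻¹ • x₂)
      = (a * ρ₁ + b * ρ₂)⁻¹ • (a • x₁ + b • x₂) := by
  rw [smul_smul, smul_smul, smul_add, smul_smul, smul_smul]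
  congr 2 <;> field_simp

theorem ConvexOn.perspective_le (hφ : ConvexOn ℝ s φ) {a b ρ₁ ρ₂ : ℝ} {x₁ x₂ : E}
    (hρ₁ : 0 < ρ₁) (hρ₂ : 0 < ρ₂) (hx₁ : ρ₁⁻¹ • x₁ ∈ s) (hx₂ : ρ₂⁻¹ • x₂ ∈ s)
    (ha : 0 ≤ a) (hb : 0 ≤ b) (hab : a + b = 1) :
    perspective φ (a * ρ₁ + b * ρ₂) (a • x₁ + b • x₂)
      ≤ a * perspective φ ρ₁ x₁ + b * perspective φ ρ₂ x₂ := by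
  have hρ : 0 < a * ρ₁ + b * ρ₂ := (convex_Ioi (0 : ℝ)) hρ₁ hρ₂ ha hb hab
  have key := hφ.2 hx₁ hx₂ (by positivity) (by positivity)
    (show a * ρ₁ / (a * ρ₁ + b * ρ₂) + b * ρ₂ / (a * ρ₁ + b * ρ₂) = 1 by field_simp)
  rw [perspective_weights x₁ x₂ hρ₁ hρ₂ hρ, smul_eq_mul, smul_eq_mul] at key
  calc perspective φ (a * ρ₁ + b * ρ₂) (a • x₁ + b • x₂)
      ≤ (a * ρ₁ + b * ρ₂) * (a * ρ₁ / (a * ρ₁ + b * ρ₂) * φ (ρ₁⁻¹ • x₁)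
          + b * ρ₂ / (a * ρ₁ + b * ρ₂) * φ (ρ₂⁻¹ • x₂)) := mul_le_mul_of_nonneg_left key hρ.le
    _ = a * perspective φ ρ₁ x₁ + b * perspective φ ρ₂ x₂ := by
      unfold perspective; field_simp

theorem StrictConvexOn.perspective_lt (hφ : StrictConvexOn ℝ s φ) {a b ρ₁ ρ₂ : ℝ} {x₁ x₂ : E}
    (hρ₁ : 0 < ρ₁) (hρ₂ : 0 < ρ₂) (hx₁ : ρ₁⁻¹ • x₁ ∈ s) (hx₂ : ρ₂⁻¹ • x₂ ∈ s)
    (hx : ρ₁⁻¹ • x₁ ≠ ρ₂⁻¹ • x₂) (ha : 0 < a) (hb : 0 < b) :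
    perspective φ (a * ρ₁ + b * ρ₂) (a • x₁ + b • x₂)
      < a * perspective φ ρ₁ x₁ + b * perspective φ ρ₂ x₂ := by
  have hρ : 0 < a * ρ₁ + b * ρ₂ := by positivity
  have key := hφ.2 hx₁ hx₂ hx (by positivity) (by positivity)
    (show a * ρ₁ / (a * ρ₁ + b * ρ₂) + b * ρ₂ / (a * ρ₁ + b * ρ₂) = 1 by field_simp)
  rw [perspective_weights x₁ x₂ hρ₁ hρ₂ hρ, smul_eq_mul, smul_eq_mul] at key
  calc perspective φ (a * ρ₁ + b * ρ₂) (a • x₁ + b • x₂)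
      < (a * ρ₁ + b * ρ₂) * (a * ρ₁ / (a * ρ₁ + b * ρ₂) * φ (ρ₁⁻¹ • x₁)
          + b * ρ₂ / (a * ρ₁ + b * ρ₂) * φ (ρ₂⁻¹ • x₂)) := mul_lt_mul_of_pos_left key hρ
    _ = a * perspective φ ρ₁ x₁ + b * perspective φ ρ₂ x₂ := by
      unfold perspective; field_simp

end Perspective

theorem strictConvexOn_sum_sq {ι : Type*} [Fintype ι] :
    StrictConvexOn ℝ univ (fun x : ι → ℝ ↦ ∑ i, x i ^ 2) := by
  refine ⟨convex_univ, fun x _ y _ hxy a b ha hb hab ↦ ?_⟩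
  obtain ⟨i, hi⟩ := Function.ne_iff.mp hxy
  simp only [Pi.add_apply, Pi.smul_apply, smul_eq_mul, Finset.mul_sum, ← Finset.sum_add_distrib]
  refine Finset.sum_lt_sum (fun j _ ↦ ?_) ⟨i, Finset.mem_univ i, ?_⟩
  · exact (Even.convexOn_pow even_two).2 trivial trivial ha.le hb.le hab
  · exact (Even.strictConvexOn_pow even_two two_ne_zero).2 trivial trivial hi ha hb hab

theorem perspective_sum_sq {ι : Type*} [Fintype ι] {t : ℝ} (ht : t ≠ 0) (x : ι → ℝ) :
    perspective (fun x : ι → ℝ ↦ ∑ i, x i ^ 2) t x = (∑ i, x i ^ 2) / t := by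
  simp only [perspective, Pi.smul_apply, smul_eq_mul, mul_pow, ← Finset.mul_sum]
  field_simp

theorem perspective_neg_log {t p : ℝ} (ht : 0 < t) (hp : 0 < p) :
    perspective (fun x ↦ -log x) t p = t * (log t - log p) := by
  rw [perspective, smul_eq_mul, log_mul (inv_ne_zero ht.ne') hp.ne', log_inv]
  ring

noncomputable def speciesEntropy (γ ρ p : ℝ) : ℝ := -(ρ * (log p - γ * log ρ)) / (γ - 1)

section SpeciesEntropy

variable {γ : ℝ}

theorem speciesEntropy_eq (hγ : 1 < γ) {ρ p : ℝ} (hρ : 0 < ρ) (hp : 0 < p) :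
    speciesEntropy γ ρ p = ρ * log ρ + (γ - 1)⁻¹ * perspective (fun x ↦ -log x) ρ p := by
  have : γ - 1 ≠ 0 := by linarith
  rw [speciesEntropy, perspective_neg_log hρ hp]
  field_simp
  ring

theorem speciesEntropy_strictAntiOn (hγ : 1 < γ) {ρ : ℝ} (hρ : 0 < ρ) :
    StrictAntiOn (speciesEntropy γ ρ) (Ioi 0) := by
  intro p₁ hp₁ p₂ _ hp
  have hlog := log_lt_log hp₁ hp
  unfold speciesEntropy
  exact div_lt_div_of_pos_right (by nlinarith) (by linarith)

theorem speciesEntropy_strictConvexOn (hγ : 1 < γ) :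
    StrictConvexOn ℝ (Ioi 0 ×ˢ Ioi 0) (fun q : ℝ × ℝ ↦ speciesEntropy γ q.1 q.2) := by
  refine ⟨(convex_Ioi 0).prod (convex_Ioi 0), ?_⟩
  rintro ⟨ρ₁, p₁⟩ ⟨hρ₁, hp₁⟩ ⟨ρ₂, p₂⟩ ⟨hρ₂, hp₂⟩ hne a b ha hb hab
  simp only [mem_Ioi] at hρ₁ hp₁ hρ₂ hp₂
  simp only [Prod.smul_mk, Prod.mk_add_mk, smul_eq_mul]
  have hmem {ρ p : ℝ} (hρ : 0 < ρ) (hp : 0 < p) : ρ⁻¹ • p ∈ Ioi (0 : ℝ) :=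
    smul_pos (inv_pos.2 hρ) hp
  have hlog : StrictConvexOn ℝ (Ioi 0) (fun x ↦ -log x) := strictConcaveOn_log_Ioi.neg
  have hmul := strictConvexOn_mul_log.subset Ioi_subset_Ici_self (convex_Ioi 0)
  have hmul_le := hmul.convexOn.2 hρ₁ hρ₂ ha.le hb.le hab
  have hper_le := hlog.convexOn.perspective_le (x₁ := p₁) (x₂ := p₂) hρ₁ hρ₂
    (hmem hρ₁ hp₁) (hmem hρ₂ hp₂) ha.le hb.le hab
  simp only [smul_eq_mul] at hmul_le hper_le
  rw [speciesEntropy_eq hγ (by positivity) (by positivity), speciesEntropy_eq hγ hρ₁ hp₁,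
    speciesEntropy_eq hγ hρ₂ hp₂]
  have hγ' : 0 < γ - 1 := by linarith
  rcases eq_or_ne ρ₁ ρ₂ with rfl | hρ
  · have hp : ρ₁⁻¹ • p₁ ≠ ρ₁⁻¹ • p₂ := by
      simpa [hρ₁.ne'] using hne
    have hper := hlog.perspective_lt hρ₁ hρ₁ (hmem hρ₁ hp₁) (hmem hρ₁ hp₂) hp ha hb
    simp only [smul_eq_mul] at hper
    nlinarith [mul_lt_mul_of_pos_left hper (inv_pos.2 hγ')]
  · have hmul_lt := hmul.2 hρ₁ hρ₂ hρ ha hb hab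
    simp only [smul_eq_mul] at hmul_lt
    nlinarith [mul_le_mul_of_nonneg_left hper_le (inv_pos.2 hγ').le]

theorem speciesEntropy_le_of_le (hγ : 1 < γ) {a b ρ₁ ρ₂ p₁ p₂ p : ℝ} (hρ₁ : 0 < ρ₁) (hρ₂ : 0 < ρ₂)
    (hp₁ : 0 < p₁) (hp₂ : 0 < p₂) (hp : a * p₁ + b * p₂ ≤ p)
    (ha : 0 ≤ a) (hb : 0 ≤ b) (hab : a + b = 1) :
    speciesEntropy γ (a * ρ₁ + b * ρ₂) p
      ≤ a * speciesEntropy γ ρ₁ p₁ + b * speciesEntropy γ ρ₂ p₂ := by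
  have hρ : 0 < a * ρ₁ + b * ρ₂ := (convex_Ioi (0 : ℝ)) hρ₁ hρ₂ ha hb hab
  have hq : 0 < a * p₁ + b * p₂ := (convex_Ioi (0 : ℝ)) hp₁ hp₂ ha hb hab
  calc speciesEntropy γ (a * ρ₁ + b * ρ₂) p
      ≤ speciesEntropy γ (a * ρ₁ + b * ρ₂) (a * p₁ + b * p₂) :=
        (speciesEntropy_strictAntiOn hγ hρ).antitoneOn hq (hq.trans_le hp) hp
    _ ≤ a * speciesEntropy γ ρ₁ p₁ + b * speciesEntropy γ ρ₂ p₂ :=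
        (speciesEntropy_strictConvexOn hγ).convexOn.2 (x := (ρ₁, p₁)) (y := (ρ₂, p₂))
          ⟨hρ₁, hp₁⟩ ⟨hρ₂, hp₂⟩ ha hb hab

theorem speciesEntropy_lt_of_le (hγ : 1 < γ) {a b ρ₁ ρ₂ p₁ p₂ p : ℝ} (hρ₁ : 0 < ρ₁) (hρ₂ : 0 < ρ₂)
    (hp₁ : 0 < p₁) (hp₂ : 0 < p₂) (hp : a * p₁ + b * p₂ ≤ p)
    (hne : (ρ₁, p₁) ≠ (ρ₂, p₂) ∨ a * p₁ + b * p₂ < p)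
    (ha : 0 < a) (hb : 0 < b) (hab : a + b = 1) :
    speciesEntropy γ (a * ρ₁ + b * ρ₂) p
      < a * speciesEntropy γ ρ₁ p₁ + b * speciesEntropy γ ρ₂ p₂ := by
  have hρ : 0 < a * ρ₁ + b * ρ₂ := by positivity
  have hq : 0 < a * p₁ + b * p₂ := by positivity
  have hanti := speciesEntropy_strictAntiOn hγ hρ
  have hconv := speciesEntropy_strictConvexOn hγ
  rcases hne with hne | hlt
  · calc speciesEntropy γ (a * ρ₁ + b * ρ₂) p
        ≤ speciesEntropy γ (a * ρ₁ + b * ρ₂) (a * p₁ + b * p₂) :=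
          hanti.antitoneOn hq (hq.trans_le hp) hp
      _ < a * speciesEntropy γ ρ₁ p₁ + b * speciesEntropy γ ρ₂ p₂ :=
          hconv.2 (x := (ρ₁, p₁)) (y := (ρ₂, p₂)) ⟨hρ₁, hp₁⟩ ⟨hρ₂, hp₂⟩ hne ha hb hab
  · calc speciesEntropy γ (a * ρ₁ + b * ρ₂) p
        < speciesEntropy γ (a * ρ₁ + b * ρ₂) (a * p₁ + b * p₂) :=
          hanti hq (hq.trans hlt) hlt
      _ ≤ a * speciesEntropy γ ρ₁ p₁ + b * speciesEntropy γ ρ₂ p₂ :=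
          hconv.convexOn.2 (x := (ρ₁, p₁)) (y := (ρ₂, p₂)) ⟨hρ₁, hp₁⟩ ⟨hρ₂, hp₂⟩ ha.le hb.le hab

end SpeciesEntropy

section State

variable {N : ℕ} {a b : ℝ} {u v : MultiIonState N} {k : Fin N}

noncomputable def kineticEnergy (u : MultiIonState N) (k : Fin N) : ℝ :=
  (∑ i, u.2.1 k i ^ 2) / (2 * u.1 k)

noncomputable def magneticEnergy (u : MultiIonState N) : ℝ := (∑ i, u.2.2.2 i ^ 2) / 2

theorem ionPressure_eq (γ : Fin N → ℝ) (u : MultiIonState N) (k : Fin N) :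
    ionPressure γ u k = (γ k - 1) * (u.2.2.1 k - kineticEnergy u k - magneticEnergy u) := rfl

theorem mathEntropy_eq_sum (γ : Fin N → ℝ) (u : MultiIonState N) :
    mathEntropy γ u = ∑ k, speciesEntropy (γ k) (u.1 k) (ionPressure γ u k) := rfl

theorem MultiIonState.density_add (a b : ℝ) (u v : MultiIonState N) (k : Fin N) :
    (a • u + b • v).1 k = a * u.1 k + b * v.1 k := rfl

theorem MultiIonState.momentum_add (a b : ℝ) (u v : MultiIonState N) (k : Fin N) :
    (a • u + b • v).2.1 k = a • u.2.1 k + b • v.2.1 k := rfl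

theorem MultiIonState.energy_add (a b : ℝ) (u v : MultiIonState N) (k : Fin N) :
    (a • u + b • v).2.2.1 k = a * u.2.2.1 k + b * v.2.2.1 k := rfl

theorem MultiIonState.magneticField_add (a b : ℝ) (u v : MultiIonState N) :
    (a • u + b • v).2.2.2 = a • u.2.2.2 + b • v.2.2.2 := rfl

theorem kineticEnergy_eq_perspective (h : u.1 k ≠ 0) :
    kineticEnergy u k = perspective (fun x : Fin 3 → ℝ ↦ ∑ i, x i ^ 2) (u.1 k) (u.2.1 k) / 2 := by
  rw [perspective_sum_sq h, kineticEnergy, div_div, mul_comm]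

theorem kineticEnergy_add_le (hu : 0 < u.1 k) (hv : 0 < v.1 k)
    (ha : 0 ≤ a) (hb : 0 ≤ b) (hab : a + b = 1) :
    kineticEnergy (a • u + b • v) k ≤ a * kineticEnergy u k + b * kineticEnergy v k := by
  have hw : 0 < (a • u + b • v).1 k := (convex_Ioi (0 : ℝ)) hu hv ha hb hab
  rw [kineticEnergy_eq_perspective hu.ne', kineticEnergy_eq_perspective hv.ne',
    kineticEnergy_eq_perspective hw.ne', MultiIonState.density_add, MultiIonState.momentum_add]
  have := (strictConvexOn_sum_sq (ι := Fin 3)).convexOn.perspective_le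
    (x₁ := u.2.1 k) (x₂ := v.2.1 k) hu hv trivial trivial ha hb hab
  linarith

theorem kineticEnergy_add_lt (hu : 0 < u.1 k) (hv : 0 < v.1 k)
    (hvel : (u.1 k)⁻¹ • u.2.1 k ≠ (v.1 k)⁻¹ • v.2.1 k) (ha : 0 < a) (hb : 0 < b) :
    kineticEnergy (a • u + b • v) k < a * kineticEnergy u k + b * kineticEnergy v k := by
  have hw : 0 < (a • u + b • v).1 k := by rw [MultiIonState.density_add]; positivity
  rw [kineticEnergy_eq_perspective hu.ne', kineticEnergy_eq_perspective hv.ne',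
    kineticEnergy_eq_perspective hw.ne', MultiIonState.density_add, MultiIonState.momentum_add]
  have := (strictConvexOn_sum_sq (ι := Fin 3)).perspective_lt hu hv trivial trivial hvel ha hb
  linarith

theorem magneticEnergy_add_le (ha : 0 ≤ a) (hb : 0 ≤ b) (hab : a + b = 1) :
    magneticEnergy (a • u + b • v) ≤ a * magneticEnergy u + b * magneticEnergy v := by
  have := strictConvexOn_sum_sq.convexOn.2 (mem_univ u.2.2.2) (mem_univ v.2.2.2) ha hb hab
  rw [magneticEnergy, magneticEnergy, magneticEnergy, MultiIonState.magneticField_add]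
  simp only [smul_eq_mul] at this
  linarith

theorem magneticEnergy_add_lt (hB : u.2.2.2 ≠ v.2.2.2) (ha : 0 < a) (hb : 0 < b)
    (hab : a + b = 1) :
    magneticEnergy (a • u + b • v) < a * magneticEnergy u + b * magneticEnergy v := by
  have := strictConvexOn_sum_sq.2 (mem_univ u.2.2.2) (mem_univ v.2.2.2) hB ha hb hab
  rw [magneticEnergy, magneticEnergy, magneticEnergy, MultiIonState.magneticField_add]
  simp only [smul_eq_mul] at this
  linarith

theorem ionPressure_add_sub (γ : Fin N → ℝ) (a b : ℝ) (u v : MultiIonState N) (k : Fin N) :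
    ionPressure γ (a • u + b • v) k - (a * ionPressure γ u k + b * ionPressure γ v k)
      = (γ k - 1) * ((a * kineticEnergy u k + b * kineticEnergy v k
          - kineticEnergy (a • u + b • v) k)
        + (a * magneticEnergy u + b * magneticEnergy v - magneticEnergy (a • u + b • v))) := by
  simp only [ionPressure_eq, MultiIonState.energy_add]
  ring

theorem ionPressure_concaveOn {γ : Fin N → ℝ} (hγ : 1 ≤ γ k) :
    ConcaveOn ℝ {u : MultiIonState N | 0 < u.1 k} (fun u ↦ ionPressure γ u k) := by
  refine ⟨fun u hu v hv a b ha hb hab ↦ (convex_Ioi (0 : ℝ)) hu hv ha hb hab,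
    fun u hu v hv a b ha hb hab ↦ ?_⟩
  have := ionPressure_add_sub γ a b u v k
  have hK := kineticEnergy_add_le hu hv ha hb hab
  have hB := magneticEnergy_add_le (u := u) (v := v) ha hb hab
  simp only [smul_eq_mul]
  nlinarith

theorem ionPressure_add_lt {γ : Fin N → ℝ} (hγ : 1 < γ k) (hu : 0 < u.1 k) (hv : 0 < v.1 k)
    (hne : (u.1 k)⁻¹ • u.2.1 k ≠ (v.1 k)⁻¹ • v.2.1 k ∨ u.2.2.2 ≠ v.2.2.2)
    (ha : 0 < a) (hb : 0 < b) (hab : a + b = 1) :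
    a * ionPressure γ u k + b * ionPressure γ v k < ionPressure γ (a • u + b • v) k := by
  have := ionPressure_add_sub γ a b u v k
  have hK := kineticEnergy_add_le hu hv ha.le hb.le hab
  have hB := magneticEnergy_add_le (u := u) (v := v) ha.le hb.le hab
  rcases hne with hvel | hB'
  · have := kineticEnergy_add_lt hu hv hvel ha hb
    nlinarith
  · have := magneticEnergy_add_lt hB' ha hb hab
    nlinarith

theorem MultiIonState.ext_of_ionPressure {γ : Fin N → ℝ} (hγ : ∀ k, γ k ≠ 1)
    (hρ : u.1 = v.1) (hm : u.2.1 = v.2.1)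
    (hp : ∀ k, ionPressure γ u k = ionPressure γ v k) (hB : u.2.2.2 = v.2.2.2) : u = v := by
  have hE : u.2.2.1 = v.2.2.1 := by
    funext k
    have h := hp k
    rw [ionPressure_eq, ionPressure_eq, kineticEnergy, kineticEnergy, magneticEnergy,
      magneticEnergy, hρ, hm, hB] at h
    exact sub_left_injective (sub_left_injective (mul_left_cancel₀ (sub_ne_zero.2 (hγ k)) h))
  exact Prod.ext hρ (Prod.ext hm (Prod.ext hE hB))

theorem convex_admissibleStates {γ : Fin N → ℝ} (hγ : ∀ k, 1 ≤ γ k) :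
    Convex ℝ {u : MultiIonState N | (∀ k, 0 < u.1 k) ∧ ∀ k, 0 < ionPressure γ u k} := by
  intro u hu v hv a b ha hb hab
  refine ⟨fun k ↦ (convex_Ioi (0 : ℝ)) (hu.1 k) (hv.1 k) ha hb hab, fun k ↦ ?_⟩
  exact ((convex_Ioi (0 : ℝ)) (hu.2 k) (hv.2 k) ha hb hab).trans_le
    ((ionPressure_concaveOn (hγ k)).2 (hu.1 k) (hv.1 k) ha hb hab)

theorem exists_ne_or_ionPressure_add_lt (hN : 1 ≤ N) {γ : Fin N → ℝ} (hγ : ∀ k, 1 < γ k)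
    (hu : ∀ k, 0 < u.1 k) (hv : ∀ k, 0 < v.1 k) (huv : u ≠ v) (ha : 0 < a) (hb : 0 < b) (hab : a + b = 1) :
    ∃ k, (u.1 k, ionPressure γ u k) ≠ (v.1 k, ionPressure γ v k)
      ∨ a * ionPressure γ u k + b * ionPressure γ v k < ionPressure γ (a • u + b • v) k := by
  by_contra! h
  have hρ : ∀ k, u.1 k = v.1 k := fun k ↦ (Prod.ext_iff.1 (h k).1).1
  have hp : ∀ k, ionPressure γ u k = ionPressure γ v k := fun k ↦ (Prod.ext_iff.1 (h k).1).2
  have hB : u.2.2.2 = v.2.2.2 := by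
    by_contra hB
    exact not_lt_of_ge (h ⟨0, hN⟩).2
      (ionPressure_add_lt (hγ _) (hu _) (hv _) (Or.inr hB) ha hb hab)
  have hm : u.2.1 = v.2.1 := by
    funext k
    by_contra hm
    refine not_lt_of_ge (h k).2 (ionPressure_add_lt (hγ k) (hu k) (hv k) (Or.inl ?_) ha hb hab)
    rwa [hρ k, Ne, smul_right_inj (inv_ne_zero (hv k).ne')]
  exact huv (MultiIonState.ext_of_ionPressure (fun k ↦ (hγ k).ne') (funext hρ) hm hp hB)

end State

/-- The mathematical entropy `S` is strictly convex with respect to the state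
variables `(ρ_k, m_k, E_k, B)` on the domain where all densities and pressures
are positive, for any number of species `N ≥ 1` and heat capacity ratios
`γ_k > 1`. -/
theorem mathEntropy_strictConvexOn (N : ℕ) (hN : 1 ≤ N) (γ : Fin N → ℝ)
    (hγ : ∀ k, 1 < γ k) :
    StrictConvexOn ℝ
      {u : MultiIonState N | (∀ k, 0 < u.1 k) ∧ ∀ k, 0 < ionPressure γ u k}
      (mathEntropy γ) := by
  refine ⟨convex_admissibleStates fun k ↦ (hγ k).le, ?_⟩
  rintro u ⟨huρ, hup⟩ v ⟨hvρ, hvp⟩ huv a b ha hb hab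
  have hp k : a * ionPressure γ u k + b * ionPressure γ v k ≤ ionPressure γ (a • u + b • v) k :=
    (ionPressure_concaveOn (hγ k).le).2 (huρ k) (hvρ k) ha.le hb.le hab
  obtain ⟨k, hk⟩ := exists_ne_or_ionPressure_add_lt hN hγ huρ hvρ huv ha hb hab
  simp only [mathEntropy_eq_sum, smul_eq_mul, Finset.mul_sum, ← Finset.sum_add_distrib]
  refine Finset.sum_lt_sum (fun j _ ↦ ?_) ⟨k, Finset.mem_univ k, ?_⟩
  · exact speciesEntropy_le_of_le (hγ j) (huρ j) (hvρ j) (hup j) (hvp j) (hp j) ha.le hb.le hab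
  · exact speciesEntropy_lt_of_le (hγ k) (huρ k) (hvρ k) (hup k) (hvp k) (hp k) hk ha hb hab
end

section
/- The block matrix Ĥ = [[𝒜, ℬ], [ℬᵀ, 𝒞]] defined by the multi-ion GLM-MHD dissipation operator is symmetric positive definite, given that all logarithmic-mean densities ρ_k^ln > 0, all mean pressures p̄_k > 0, all p_k* > 0, τ⁺ > 0, and γ_k > 1. -/
/-!
Taking the Schur complement of the GLM block `𝒞 = τ⁺ I₄` subtracts `(1/τ⁺) ℬ ℬᵀ` from `𝒜`.
Its only nonzero entries are `Ē_mag²` in every `(5,5)` position, which is exactly the magnetic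
energy coupling the ion species, so the Schur complement is the block diagonal matrix of the
hydrodynamic blocks `A_k` with `Ē_mag² = 0`. Each of these has the LDLᵀ factorization `Uᵀ D U`
with `U` unit upper triangular and pivots `D = diag(ρ, p̄, p̄, p̄, (p*)² / ((γ - 1) ρ))`, all
positive.
-/

open Matrix

/-- The hydrodynamic 5×5 block `A_k` of the multi-ion GLM-MHD dissipation
matrix, with density `ρ` (log mean), pressure mean `p̄`, pressure `p*`,
heat capacity ratio `γ`, energy mean `Ē`, magnetic energy `Ē_mag²` and
velocity mean `v`. -/
noncomputable def Ablock (ρ pbar pstar γ Ebar Emag2 : ℝ) (v : Fin 3 → ℝ) :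
    Matrix (Fin 5) (Fin 5) ℝ :=
  !![ρ, ρ * v 0, ρ * v 1, ρ * v 2, Ebar;
     ρ * v 0, ρ * v 0 * v 0 + pbar, ρ * v 0 * v 1, ρ * v 0 * v 2,
       (Ebar + pbar) * v 0;
     ρ * v 1, ρ * v 1 * v 0, ρ * v 1 * v 1 + pbar, ρ * v 1 * v 2,
       (Ebar + pbar) * v 1;
     ρ * v 2, ρ * v 2 * v 0, ρ * v 2 * v 1, ρ * v 2 * v 2 + pbar,
       (Ebar + pbar) * v 2;
     Ebar, (Ebar + pbar) * v 0, (Ebar + pbar) * v 1, (Ebar + pbar) * v 2,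
       (1 / ρ) * (pstar ^ 2 / (γ - 1) + Ebar ^ 2)
         + pbar * (v 0 ^ 2 + v 1 ^ 2 + v 2 ^ 2) + Emag2]

/-- The GLM block vector `(⟨B₁⟩, ⟨B₂⟩, ⟨B₃⟩, ⟨ψ⟩)`. -/
def bvec (Bavg : Fin 3 → ℝ) (ψ : ℝ) : Fin 4 → ℝ := ![Bavg 0, Bavg 1, Bavg 2, ψ]

/-- The full dissipation matrix `Ĥ = [[𝒜, ℬ], [ℬᵀ, 𝒞]]` of the multi-ion
GLM-MHD system: `𝒜` has diagonal blocks `A_k` and off-diagonal blocks with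
single `(5,5)` entry `Ē_mag²`; `ℬ` consists of stacked blocks whose only
nonzero row is `(τ⁺⟨B₁⟩, τ⁺⟨B₂⟩, τ⁺⟨B₃⟩, τ⁺⟨ψ⟩)`; `𝒞 = τ⁺I₄`. -/
noncomputable def Hhat (N : ℕ) (ρln pbar pstar γ Ebar : Fin N → ℝ)
    (v : Fin N → Fin 3 → ℝ) (τ : ℝ) (Bavg : Fin 3 → ℝ) (ψ : ℝ) :
    Matrix ((Fin N × Fin 5) ⊕ Fin 4) ((Fin N × Fin 5) ⊕ Fin 4) ℝ :=
  let Emag2 : ℝ := τ * ((∑ i, (Bavg i) ^ 2) + ψ ^ 2)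
  fun i j =>
    match i, j with
    | Sum.inl (k, m), Sum.inl (l, n) =>
        if k = l then Ablock (ρln k) (pbar k) (pstar k) (γ k) (Ebar k) Emag2 (v k) m n
        else if m = 4 ∧ n = 4 then Emag2 else 0
    | Sum.inl (_, m), Sum.inr c => if m = 4 then τ * bvec Bavg ψ c else 0
    | Sum.inr c, Sum.inl (_, m) => if m = 4 then τ * bvec Bavg ψ c else 0
    | Sum.inr c, Sum.inr d => if c = d then τ else 0

namespace Matrix

variable {m n o R : Type*} [Fintype m] [Fintype n] [Fintype o]

theorem dotProduct_blockDiagonal_mulVec [DecidableEq o] [NonUnitalNonAssocSemiring R]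
    (M : o → Matrix m m R) (x y : m × o → R) :
    x ⬝ᵥ blockDiagonal M *ᵥ y = ∑ k, (fun i => x (i, k)) ⬝ᵥ M k *ᵥ fun j => y (j, k) := by
  simp only [dotProduct, mulVec, blockDiagonal_apply, Fintype.sum_prod_type, ite_mul, zero_mul,
    Finset.sum_ite_eq, Finset.mem_univ, if_true]
  rw [Finset.sum_comm]

variable [CommRing R] [PartialOrder R] [StarRing R] [StarOrderedRing R]

theorem PosDef.blockDiagonal [DecidableEq o] {M : o → Matrix m m R} (hM : ∀ k, (M k).PosDef) :
    (blockDiagonal M).PosDef := by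
  refine .of_dotProduct_mulVec_pos (isHermitian_blockDiagonal_iff.mpr fun k => (hM k).1)
    fun x hx => ?_
  rw [dotProduct_blockDiagonal_mulVec]
  obtain ⟨⟨i, k⟩, hik⟩ := Function.ne_iff.mp hx
  have hk : (fun i => x (i, k)) ≠ 0 := fun h => hik (congrFun h i)
  refine Finset.sum_pos' (fun l _ => ?_) ⟨k, Finset.mem_univ _, (hM k).dotProduct_mulVec_pos hk⟩
  exact (hM l).posSemidef.dotProduct_mulVec_nonneg _

theorem PosDef.fromBlocks_of_schur₂₂ [DecidableEq n] {A : Matrix m m R} {B : Matrix m n R}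
    {D : Matrix n n R} [Invertible D] (hD : D.PosDef) (hS : (A - B * D⁻¹ * Bᴴ).PosDef) :
    (fromBlocks A B Bᴴ D).PosDef := by
  refine .of_dotProduct_mulVec_pos ((IsHermitian.fromBlocks₂₂ A B hD.1).mpr hS.1) fun z hz => ?_
  obtain ⟨x, y, rfl⟩ : ∃ x y, z = x ⊕ᵥ y := ⟨_, _, (Sum.elim_comp_inl_inr z).symm⟩
  rw [dotProduct_mulVec, schur_complement_eq₂₂ A B _ _ hD.1, ← dotProduct_mulVec,
    ← dotProduct_mulVec]
  by_cases hx : x = 0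
  · have hy : y ≠ 0 := fun hy => hz (by simp [hx, hy])
    simpa [hx] using hD.dotProduct_mulVec_pos hy
  · exact add_pos_of_nonneg_of_pos (hD.posSemidef.dotProduct_mulVec_nonneg _)
      (hS.dotProduct_mulVec_pos hx)

end Matrix

noncomputable def AblockUnitriangular (ρ Ebar : ℝ) (v : Fin 3 → ℝ) : Matrix (Fin 5) (Fin 5) ℝ :=
  !![1, v 0, v 1, v 2, Ebar / ρ;
     0, 1, 0, 0, v 0;
     0, 0, 1, 0, v 1;
     0, 0, 0, 1, v 2;
     0, 0, 0, 0, 1]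

noncomputable def AblockPivots (ρ pbar pstar γ : ℝ) : Fin 5 → ℝ :=
  ![ρ, pbar, pbar, pbar, pstar ^ 2 / ((γ - 1) * ρ)]

theorem Ablock_zero_eq_transpose_mul_diagonal_mul {ρ : ℝ} (hρ : ρ ≠ 0) (pbar pstar γ Ebar : ℝ)
    (v : Fin 3 → ℝ) :
    Ablock ρ pbar pstar γ Ebar 0 v =
      (AblockUnitriangular ρ Ebar v)ᵀ * diagonal (AblockPivots ρ pbar pstar γ) *
        AblockUnitriangular ρ Ebar v := by
  ext i j
  fin_cases i <;> fin_cases j <;>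
    simp [Ablock, AblockUnitriangular, AblockPivots, mul_apply, Fin.sum_univ_five] <;>
    grind

theorem det_AblockUnitriangular (ρ Ebar : ℝ) (v : Fin 3 → ℝ) :
    (AblockUnitriangular ρ Ebar v).det = 1 := by
  rw [det_of_isUpperTriangular]
  · simp [AblockUnitriangular, Fin.prod_univ_five]
  · intro i j hij
    fin_cases i <;> fin_cases j <;> simp_all [AblockUnitriangular]

theorem Ablock_zero_posDef {ρ pbar pstar γ : ℝ} (hρ : 0 < ρ) (hp : 0 < pbar) (hps : pstar ≠ 0)
    (hγ : 1 < γ) (Ebar : ℝ) (v : Fin 3 → ℝ) : (Ablock ρ pbar pstar γ Ebar 0 v).PosDef := by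
  have hU : IsUnit (AblockUnitriangular ρ Ebar v) := by
    simp [isUnit_iff_isUnit_det, det_AblockUnitriangular]
  rw [Ablock_zero_eq_transpose_mul_diagonal_mul hρ.ne', ← conjTranspose_eq_transpose_of_trivial,
    ← star_eq_conjTranspose, hU.posDef_star_left_conjugate_iff, posDef_diagonal_iff]
  have hγ' : 0 < γ - 1 := sub_pos.mpr hγ
  have hq : 0 < pstar ^ 2 / ((γ - 1) * ρ) := by positivity
  intro i
  fin_cases i <;> simpa [AblockPivots]

theorem Ablock_eq_add_single (ρ pbar pstar γ Ebar Emag2 : ℝ) (v : Fin 3 → ℝ) :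
    Ablock ρ pbar pstar γ Ebar Emag2 v = Ablock ρ pbar pstar γ Ebar 0 v + single 4 4 Emag2 := by
  ext i j
  fin_cases i <;> fin_cases j <;> simp [Ablock, single]

section Hhat

variable {N : ℕ} {ρln pbar pstar γ Ebar : Fin N → ℝ} {v : Fin N → Fin 3 → ℝ} {τ : ℝ}
  {Bavg : Fin 3 → ℝ} {ψ : ℝ}

theorem Hhat_toBlocks₂₂ : (Hhat N ρln pbar pstar γ Ebar v τ Bavg ψ).toBlocks₂₂ = τ • 1 := by
  ext c d
  simp [toBlocks₂₂, Hhat, one_apply]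

theorem Hhat_toBlocks₂₁ :
    (Hhat N ρln pbar pstar γ Ebar v τ Bavg ψ).toBlocks₂₁ =
      (Hhat N ρln pbar pstar γ Ebar v τ Bavg ψ).toBlocks₁₂ᴴ := by
  ext c ⟨k, m⟩
  simp [toBlocks₂₁, toBlocks₁₂, Hhat]

theorem Hhat_schur_complement (hτ : τ ≠ 0) :
    (Hhat N ρln pbar pstar γ Ebar v τ Bavg ψ).toBlocks₁₁ -
        (Hhat N ρln pbar pstar γ Ebar v τ Bavg ψ).toBlocks₁₂ *
          (τ • 1 : Matrix (Fin 4) (Fin 4) ℝ)⁻¹ *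
          (Hhat N ρln pbar pstar γ Ebar v τ Bavg ψ).toBlocks₁₂ᴴ =
      (blockDiagonal fun k => Ablock (ρln k) (pbar k) (pstar k) (γ k) (Ebar k) 0 (v k)).submatrix
        Prod.swap Prod.swap := by
  have hinv : (τ • 1 : Matrix (Fin 4) (Fin 4) ℝ)⁻¹ = τ⁻¹ • 1 :=
    inv_eq_right_inv (by simp [smul_smul, hτ])
  have hEmag : τ⁻¹ * (τ * Bavg 0) * (τ * Bavg 0) + τ⁻¹ * (τ * Bavg 1) * (τ * Bavg 1) +
      τ⁻¹ * (τ * Bavg 2) * (τ * Bavg 2) + τ⁻¹ * (τ * ψ) * (τ * ψ) =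
        τ * (∑ i, Bavg i ^ 2 + ψ ^ 2) := by
    rw [Fin.sum_univ_three]
    field_simp
  rw [hinv]
  ext ⟨k, m⟩ ⟨l, n⟩
  simp only [toBlocks₁₁, Hhat, bvec, toBlocks₁₂, Matrix.mul_smul, Matrix.mul_one, smul_of,
    conjTranspose_eq_transpose_of_trivial, Matrix.sub_apply, of_apply, mul_apply, Pi.smul_apply,
    smul_eq_mul, mul_ite, mul_zero, transpose_apply, ite_mul, zero_mul, Finset.sum_ite_irrel,
    Fin.sum_univ_four, Finset.sum_const_zero, submatrix_apply, Prod.swap_prod_mk,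
    blockDiagonal_apply]
  rw [Ablock_eq_add_single]
  by_cases hm : m = 4 <;> by_cases hn : n = 4 <;> by_cases hkl : k = l <;>
    simp [hm, hn, hkl, hEmag, eq_comm (a := (4 : Fin 5))]

end Hhat

theorem Hhat_posDef_general (N : ℕ)
    (ρln pbar pstar γ Ebar : Fin N → ℝ) (v : Fin N → Fin 3 → ℝ)
    (τ : ℝ) (Bavg : Fin 3 → ℝ) (ψ : ℝ)
    (hρ : ∀ k, 0 < ρln k) (hp : ∀ k, 0 < pbar k) (hps : ∀ k, 0 < pstar k)
    (hγ : ∀ k, 1 < γ k) (hτ : 0 < τ) :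
    (Hhat N ρln pbar pstar γ Ebar v τ Bavg ψ).PosDef := by
  have hC : (τ • 1 : Matrix (Fin 4) (Fin 4) ℝ).PosDef := PosDef.one.smul hτ
  have := hC.isUnit.invertible
  rw [← fromBlocks_toBlocks (Hhat N ρln pbar pstar γ Ebar v τ Bavg ψ), Hhat_toBlocks₂₁,
    Hhat_toBlocks₂₂]
  refine hC.fromBlocks_of_schur₂₂ ?_
  rw [Hhat_schur_complement hτ.ne']
  exact (PosDef.blockDiagonal fun k =>
    Ablock_zero_posDef (hρ k) (hp k) (hps k).ne' (hγ k) _ _).submatrix Prod.swap_injective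

/-- The dissipation matrix `Ĥ` of the multi-ion GLM-MHD system is symmetric
positive definite whenever all `ρ_k^ln > 0`, `p̄_k > 0`, `p_k* > 0`,
`γ_k > 1`, `τ⁺ > 0`, and `Ē_k = p_k*/(γ_k−1) + ½ρ_k^ln‖v_k‖̄²`. -/
theorem Hhat_posDef (N : ℕ) (hN : 1 ≤ N)
    (ρln pbar pstar γ Ebar vbar2 : Fin N → ℝ) (v : Fin N → Fin 3 → ℝ)
    (τ : ℝ) (Bavg : Fin 3 → ℝ) (ψ : ℝ)
    (hρ : ∀ k, 0 < ρln k) (hp : ∀ k, 0 < pbar k) (hps : ∀ k, 0 < pstar k)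
    (hγ : ∀ k, 1 < γ k) (hτ : 0 < τ)
    (hE : ∀ k, Ebar k = pstar k / (γ k - 1) + (1 / 2) * ρln k * vbar2 k) :
    (Hhat N ρln pbar pstar γ Ebar v τ Bavg ψ).PosDef :=
  Hhat_posDef_general N ρln pbar pstar γ Ebar v τ Bavg ψ hρ hp hps hγ hτ
end
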